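/- Let S be a finite semigroup, P a nonempty subset of S, and k ≥ 1 an integer such that the setwise products satisfy P^{k+1} = P. Then for every p ∈ P there exist elements s_1, …, s_k, e_1, …, e_k, t of P such that the product e := e_1⋯e_k is idempotent and p = s_1⋯s_k · e · t. -/

import Mathlib

open Pointwise

/-- `spow s n` is the power `s^(n+1)` of `s`, defined in any magma. -/
def spow {S : Type*} [Mul S] (s : S) (n : ℕ) : S := (fun x => x * s)^[n] s

/-- The product `f 0 * f 1 * ⋯ * f (k-1)` of a nonempty finite family in a
semigroup. -/
def finProd {S : Type*} [Mul S] {k : ℕ} (hk : 0 < k) (f : Fin k → S) : S :=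
  (List.ofFn f).tail.foldl (· * ·) (f ⟨0, hk⟩)

/-!
Put `Q = P^k`. From `P^(k+1) = P` we get `Q * Q ⊆ Q` and `P ⊆ Q * P`, so `p ∈ P` can be
written `p = a * t` with `a ∈ Q`, `t ∈ P`, and the left factor `a` can always be lengthened on
the right by an element of `Q`. In a finite semigroup this process must cycle, giving such an `a`
with `a * d = a` for some `d ∈ Q`. The elements `x ∈ Q` with `a * x = a` form a finite
subsemigroup, which contains an idempotent `e`; then `p = a * e * t`.
-/

section spow

variable {S : Type*}

lemma spow_zero [Mul S] (s : S) : spow s 0 = s := rfl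

lemma spow_succ [Mul S] (s : S) (n : ℕ) : spow s (n + 1) = spow s n * s :=
  Function.iterate_succ_apply' _ _ _

lemma spow_mul_spow [Semigroup S] (s : S) (a b : ℕ) :
    spow s a * spow s b = spow s (a + b + 1) := by
  induction b with
  | zero => exact (spow_succ s a).symm
  | succ b ih => rw [spow_succ, ← mul_assoc, ih, ← spow_succ]; rfl

lemma spow_add_eq_of_spow_eq [Semigroup S] {s : S} {n : ℕ} (h : spow s (n + 1) = s) (a : ℕ) :
    spow s (a + (n + 1)) = spow s a := by
  cases a with
  | zero => rwa [zero_add]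
  | succ b => rw [add_right_comm, ← spow_mul_spow, h, spow_succ]

end spow

section finProd

variable {S : Type*} [Mul S]

lemma finProd_snoc {n : ℕ} (hn : 0 < n) (f : Fin n → S) (x : S) :
    finProd n.succ_pos (Fin.snoc f x : Fin (n + 1) → S) = finProd hn f * x := by
  have hne : List.ofFn f ≠ [] := by simpa using hn.ne'
  have h0 : (Fin.snoc f x : Fin (n + 1) → S) ⟨0, n.succ_pos⟩ = f ⟨0, hn⟩ :=
    Fin.snoc_castSucc (i := ⟨0, hn⟩) ..
  simp only [finProd, List.ofFn_succ_last, Fin.snoc_castSucc, Fin.snoc_last,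
    List.tail_append_of_ne_nil hne, List.foldl_append, List.foldl_cons, List.foldl_nil, h0]

lemma exists_finProd_eq_of_mem_spow {P : Set S} {n : ℕ} (hn : 0 < n + 1) {x : S}
    (hx : x ∈ spow P n) : ∃ f : Fin (n + 1) → S, (∀ i, f i ∈ P) ∧ finProd hn f = x := by
  induction n generalizing x with
  | zero => exact ⟨fun _ => x, fun _ => hx, rfl⟩
  | succ n ih =>
    rw [spow_succ] at hx
    obtain ⟨y, hy, z, hz, rfl⟩ := hx
    obtain ⟨f, hf, rfl⟩ := ih n.succ_pos hy
    refine ⟨Fin.snoc f z, fun i => ?_, finProd_snoc _ f z⟩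
    refine Fin.lastCases ?_ (fun j => ?_) i
    · simpa using hz
    · simpa using hf j

end finProd

lemma Finite.exists_rel_self {α : Type*} [Finite α] [Nonempty α] (r : α → α → Prop)
    (htrans : ∀ a b c, r a b → r b c → r a c) (hsucc : ∀ a, ∃ b, r a b) : ∃ a, r a a := by
  by_contra! hirr
  have : IsTrans α (flip r) := ⟨fun a b c hab hbc => htrans c b a hbc hab⟩
  have : Std.Irrefl (flip r) := ⟨hirr⟩
  obtain ⟨a, -, hmin⟩ :=
    (Finite.wellFounded_of_trans_of_irrefl (flip r)).has_min Set.univ Set.univ_nonempty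
  obtain ⟨b, hab⟩ := hsucc a
  exact hmin b trivial hab

section FiniteSemigroup

variable {S : Type*} [Semigroup S] [Finite S]

lemma exists_isIdempotentElem_of_mul_mem {M : Set S} (hne : M.Nonempty)
    (hM : ∀ x ∈ M, ∀ y ∈ M, x * y ∈ M) : ∃ e ∈ M, IsIdempotentElem e := by
  let _ : TopologicalSpace S := ⊥
  have : DiscreteTopology S := ⟨rfl⟩
  exact exists_idempotent_in_compact_subsemigroup (fun _ => continuous_of_discreteTopology)
    M hne M.toFinite.isCompact hM

variable {Q P : Set S}

lemma exists_eq_mul_and_mul_eq_self (hQ : Q * Q ⊆ Q) (hP : P ⊆ Q * P) {p : S} (hp : p ∈ P) :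
    ∃ a ∈ Q, ∃ t ∈ P, p = a * t ∧ ∃ d ∈ Q, a * d = a := by
  let T := {a // a ∈ Q ∧ ∃ t ∈ P, p = a * t}
  have : Nonempty T := by
    obtain ⟨a, ha, t, ht, rfl⟩ := hP hp
    exact ⟨⟨a, ha, t, ht, rfl⟩⟩
  obtain ⟨⟨a, ha, t, ht, hpat⟩, d, hd, had⟩ :=
    Finite.exists_rel_self (fun a b : T => ∃ d ∈ Q, b.1 = a.1 * d)
      (fun _ _ _ ⟨d, hd, hab⟩ ⟨d', hd', hbc⟩ =>
        ⟨d * d', hQ (Set.mul_mem_mul hd hd'), by rw [hbc, hab, mul_assoc]⟩)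
      (fun ⟨a, ha, t, ht, hpat⟩ => by
        obtain ⟨b, hb, t', ht', rfl⟩ := hP ht
        exact ⟨⟨a * b, hQ (Set.mul_mem_mul ha hb), t', ht', by rw [hpat, mul_assoc]⟩, b, hb, rfl⟩)
  exact ⟨a, ha, t, ht, hpat, d, hd, had.symm⟩

theorem exists_eq_mul_isIdempotentElem_mul (hQ : Q * Q ⊆ Q) (hP : P ⊆ Q * P) {p : S}
    (hp : p ∈ P) : ∃ a ∈ Q, ∃ e ∈ Q, ∃ t ∈ P, IsIdempotentElem e ∧ p = a * e * t := by
  obtain ⟨a, ha, t, ht, hpat, d, hd, had⟩ := exists_eq_mul_and_mul_eq_self hQ hP hp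
  obtain ⟨e, ⟨heQ, hae⟩, he⟩ := exists_isIdempotentElem_of_mul_mem
    (M := {x | x ∈ Q ∧ a * x = a}) ⟨d, hd, had⟩
    (fun x hx y hy => ⟨hQ (Set.mul_mem_mul hx.1 hy.1), by rw [← mul_assoc, hx.2, hy.2]⟩)
  exact ⟨a, ha, e, heQ, t, ht, he, by rw [hae, hpat]⟩

end FiniteSemigroup

theorem factorization_through_idempotent_general
    {S : Type} [Semigroup S] [Finite S]
    (P : Set S)
    (k : ℕ) (hk : 1 ≤ k) (hPk : spow P k = P) :
    ∀ p ∈ P, ∃ (s e : Fin k → S) (t : S),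
      (∀ i, s i ∈ P) ∧ (∀ i, e i ∈ P) ∧ t ∈ P ∧
      IsIdempotentElem (finProd hk e) ∧
      p = finProd hk s * finProd hk e * t := by
  intro p hp
  obtain ⟨n, rfl⟩ : ∃ n, k = n + 1 := ⟨k - 1, by omega⟩
  have hQQ : spow P n * spow P n ⊆ spow P n := by
    rw [spow_mul_spow, add_assoc, spow_add_eq_of_spow_eq hPk]
  have hPQP : P ⊆ spow P n * P := by
    calc P = spow P (n + 0 + 1) := hPk.symm
      _ = spow P n * spow P 0 := (spow_mul_spow P n 0).symm
      _ ⊆ spow P n * P := subset_rfl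
  obtain ⟨a, ha, e, he, t, ht, he_idem, rfl⟩ := exists_eq_mul_isIdempotentElem_mul hQQ hPQP hp
  obtain ⟨s, hs, rfl⟩ := exists_finProd_eq_of_mem_spow hk ha
  obtain ⟨f, hf, rfl⟩ := exists_finProd_eq_of_mem_spow hk he
  exact ⟨s, f, t, hs, hf, ht, he_idem, rfl⟩

/-- If `P` is a nonempty subset of a finite semigroup `S` and `k ≥ 1` is such
that the setwise power `P^(k+1)` equals `P`, then every `p ∈ P` factorizes as
`p = s₁⋯s_k · e · t` where `e = e₁⋯e_k` is idempotent and all the elements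
`s₁, …, s_k, e₁, …, e_k, t` belong to `P`.  (Here `spow P k` is the setwise
power `P^(k+1)`.) -/
theorem factorization_through_idempotent
    {S : Type} [Semigroup S] [Finite S]
    (P : Set S) (hPne : P.Nonempty)
    (k : ℕ) (hk : 1 ≤ k) (hPk : spow P k = P) :
    ∀ p ∈ P, ∃ (s e : Fin k → S) (t : S),
      (∀ i, s i ∈ P) ∧ (∀ i, e i ∈ P) ∧ t ∈ P ∧
      IsIdempotentElem (finProd hk e) ∧
      p = finProd hk s * finProd hk e * t :=
  factorization_through_idempotent_general P k hk hPk
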